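/- Let c be a Lipschitz cost and μ ∈ P(X) with full support. Define Φ_c as the set of pairs of continuous functions (φ,ψ) ∈ C(X) × C(Ω) such that φ(x) − ψ(y) + ψ(σ(y)) ≥ c(x,y) − b(x,y) for all (x,y), for some Lipschitz b with P(b) = 0. Then inf over (φ,ψ) ∈ Φ_c of ∫_X φ dμ equals inf over continuous φ : X → ℝ with P(c − φ) = 0 of ∫_X φ dμ. -/

import Mathlib

open MeasureTheory Filter Topology

attribute [local instance] PiNat.dist

/-- The Bernoulli space `{1,...,d}^ℕ`, with the metric `dist z y = (1/2)^n` where `n`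
is the first coordinate at which `z` and `y` differ (provided by `PiNat.dist`). -/
abbrev W (d : ℕ) : Type := ℕ → Fin d

/-- The shift map `σ` on the Bernoulli space. -/
def shift {d : ℕ} (y : W d) : W d := fun n => y (n + 1)

/-- Prepend the symbol `a` to the sequence `y`, i.e. the point `a y` (a preimage of `y`
under the shift). -/
def cons {d : ℕ} (a : Fin d) (y : W d) : W d := fun n =>
  match n with
  | 0 => a
  | Nat.succ k => y k

variable {X : Type*} [Fintype X] [MeasurableSpace X] [TopologicalSpace X] {d : ℕ}

/-- `π ∈ Π(·,σ)`: a Borel probability on `X × Ω` whose `y`-marginal is `σ`-invariant. -/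
def IsPlan (π : Measure (X × W d)) : Prop :=
  IsProbabilityMeasure π ∧
    ∀ g : W d → ℝ, Continuous g → ∫ p, g (shift p.2) ∂π = ∫ p, g p.2 ∂π

/-- A cost `c` is normalized if `∑_{x ∈ X} ∑_{σ w = y} e^{c(x,w)} = 1` for every `y`. -/
def IsNormalized (c : X × W d → ℝ) : Prop :=
  ∀ y : W d, ∑ x : X, ∑ a : Fin d, Real.exp (c (x, cons a y)) = 1

/-- `π` is a fixed point of the dual transfer operator `L̂_c^*`, i.e. a Gibbs plan for `c`. -/
def GibbsFixed (c : X × W d → ℝ) (π : Measure (X × W d)) : Prop :=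
  ∀ u : X × W d → ℝ, Continuous u →
    ∫ p, u p ∂π =
      ∫ p, ∑ x : X, ∑ a : Fin d,
        Real.exp (c (x, cons a p.2)) * u (x, cons a p.2) ∂π

/-- `c` is a Lipschitz cost: Lipschitz in the `Ω` variable, uniformly in `x ∈ X`. -/
def LipCost (c : X × W d → ℝ) : Prop :=
  ∃ K : ℝ, ∀ (x : X) (y z : W d), |c (x, y) - c (x, z)| ≤ K * dist y z

/-- The entropy of a plan: `H(π) = inf { -∫ b dπ : b normalized }`. -/
noncomputable def Hent (π : Measure (X × W d)) : ℝ :=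
  sInf {r | ∃ b : X × W d → ℝ, LipCost b ∧ IsNormalized b ∧ r = -∫ p, b p ∂π}

/-- The pressure `P(c) = sup_{π ∈ Π(·,σ)} ∫ c dπ + H(π)`. -/
noncomputable def Pr (c : X × W d → ℝ) : ℝ :=
  sSup {r | ∃ π : Measure (X × W d), IsPlan π ∧ r = ∫ p, c p ∂π + Hent π}

/-!
Integrating the admissibility inequality `φ x - ψ y + ψ (σ y) ≥ c (x, y) - b (x, y)` against a
plan kills the coboundary `ψ ∘ σ - ψ`, because the `Ω`-marginal of a plan is `σ`-invariant; by
monotonicity of the pressure, `P(c - φ) ≤ P(b) = 0`. Adding to `φ` the constant `P(c - φ) ≤ 0`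
then gives a function of zero pressure with no larger integral. Conversely, if `P(c - φ) = 0`
then `(φ, 0)` is admissible with `b = c - φ`. Both infima are finite: at a fixed point `y₀` of
`σ`, the Dirac plan at `(x, y₀)` forces `b (x, y₀) ≤ P(b) = 0`, hence `φ x ≥ c (x, y₀)`.
-/

theorem csInf_eq_csInf_of_subset_of_forall_exists_le {α : Type*} [ConditionallyCompleteLattice α]
    {s t : Set α} (hs : BddBelow s) (ht : t.Nonempty) (hts : t ⊆ s)
    (h : ∀ a ∈ s, ∃ b ∈ t, b ≤ a) : sInf s = sInf t := by
  refine le_antisymm (csInf_le_csInf hs ht hts) (le_csInf (ht.mono hts) fun a ha => ?_)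
  obtain ⟨b, hb, hba⟩ := h a ha
  exact (csInf_le (hs.mono hts) hb).trans hba

theorem Continuous.integrable_of_compactSpace {α : Type*} [TopologicalSpace α] [CompactSpace α]
    [MeasurableSpace α] [OpensMeasurableSpace α] {f : α → ℝ} (hf : Continuous f) (μ : Measure α)
    [IsFiniteMeasure μ] : Integrable f μ :=
  hf.integrable_of_hasCompactSupport (.of_compactSpace f)

theorem continuous_shift : Continuous (shift (d := d)) :=
  continuous_pi fun n => continuous_apply (n + 1)

theorem tendsto_dist_nhds_self (y : W d) : Tendsto (fun z => dist z y) (𝓝 y) (𝓝 0) := by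
  refine tendsto_order.2 ⟨fun a ha => .of_forall fun z => ha.trans_le (PiNat.dist_nonneg z y),
    fun a ha => ?_⟩
  obtain ⟨n, hn⟩ := exists_pow_lt_of_lt_one ha (by norm_num : (1 / 2 : ℝ) < 1)
  filter_upwards [(PiNat.isOpen_cylinder (E := fun _ => Fin d) y n).mem_nhds
    (PiNat.self_mem_cylinder y n)] with z hz
  exact (PiNat.mem_cylinder_iff_dist_le.1 hz).trans_lt hn

theorem continuous_of_abs_sub_le_mul_dist {f : W d → ℝ} {K : ℝ}
    (hf : ∀ y z, |f y - f z| ≤ K * dist y z) : Continuous f :=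
  continuous_iff_continuousAt.2 fun y => tendsto_iff_dist_tendsto_zero.2 <|
    squeeze_zero (fun _ => dist_nonneg) (fun z => (Real.dist_eq _ _).trans_le (hf z y))
      (by simpa using (tendsto_dist_nhds_self y).const_mul K)

omit [Fintype X] [MeasurableSpace X] in
theorem LipCost.continuous [DiscreteTopology X] {b : X × W d → ℝ} (hb : LipCost b) :
    Continuous b := by
  obtain ⟨K, hK⟩ := hb
  exact continuous_prod_of_discrete_left.2 fun x => continuous_of_abs_sub_le_mul_dist (hK x)

omit [Fintype X] [MeasurableSpace X] [TopologicalSpace X] in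
theorem LipCost.sub_fst {c : X × W d → ℝ} (hc : LipCost c) (φ : X → ℝ) :
    LipCost fun p : X × W d => c p - φ p.1 := by
  obtain ⟨K, hK⟩ := hc
  exact ⟨K, fun x y z => by simpa only [sub_sub_sub_cancel_right] using hK x y z⟩

omit [Fintype X] [MeasurableSpace X] in
theorem Continuous.sub_fst [DiscreteTopology X] {c : X × W d → ℝ} (hc : Continuous c)
    (φ : X → ℝ) : Continuous fun p : X × W d => c p - φ p.1 :=
  hc.sub ((continuous_of_discreteTopology (f := φ)).comp continuous_fst)

omit [MeasurableSpace X] [TopologicalSpace X] in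
theorem IsNormalized.nonpos {b : X × W d → ℝ} (hb : IsNormalized b) (p : X × W d) : b p ≤ 0 := by
  obtain ⟨x, w⟩ := p
  have hw : cons (w 0) (shift w) = w := by
    funext n
    cases n <;> rfl
  have hexp : Real.exp (b (x, cons (w 0) (shift w))) ≤ 1 := by
    rw [← hb (shift w)]
    calc Real.exp (b (x, cons (w 0) (shift w)))
        ≤ ∑ a : Fin d, Real.exp (b (x, cons a (shift w))) :=
          Finset.single_le_sum (f := fun a => Real.exp (b (x, cons a (shift w))))
            (fun _ _ => (Real.exp_pos _).le) (Finset.mem_univ _)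
      _ ≤ ∑ x' : X, ∑ a : Fin d, Real.exp (b (x', cons a (shift w))) :=
          Finset.single_le_sum (f := fun x' => ∑ a : Fin d, Real.exp (b (x', cons a (shift w))))
            (fun _ _ => Finset.sum_nonneg fun _ _ => (Real.exp_pos _).le) (Finset.mem_univ _)
  rwa [hw, Real.exp_le_one_iff] at hexp

omit [MeasurableSpace X] [TopologicalSpace X] in
theorem isNormalized_const [Nonempty X] (hd : 0 < d) :
    IsNormalized fun _ : X × W d => -Real.log (Fintype.card X * d) := by
  intro y
  have hpos : (0 : ℝ) < Fintype.card X * d := by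
    have : (0 : ℝ) < d := by exact_mod_cast hd
    have : (0 : ℝ) < Fintype.card X := by exact_mod_cast Fintype.card_pos
    positivity
  simp only [Finset.sum_const, Finset.card_univ, Fintype.card_fin, nsmul_eq_mul, Real.exp_neg,
    Real.exp_log hpos]
  field_simp

section Entropy

omit [TopologicalSpace X]

theorem bddBelow_entropy_values (π : Measure (X × W d)) :
    BddBelow {r | ∃ b : X × W d → ℝ, LipCost b ∧ IsNormalized b ∧ r = -∫ p, b p ∂π} := by
  refine ⟨0, ?_⟩
  rintro r ⟨b, -, hb, rfl⟩
  exact neg_nonneg.2 (integral_nonpos hb.nonpos)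

theorem Hent_nonneg (π : Measure (X × W d)) : 0 ≤ Hent π :=
  Real.sInf_nonneg fun _ ⟨_, _, hb, hr⟩ => hr ▸ neg_nonneg.2 (integral_nonpos hb.nonpos)

theorem Hent_le_log [Nonempty X] (hd : 0 < d) (π : Measure (X × W d)) [IsProbabilityMeasure π] :
    Hent π ≤ Real.log (Fintype.card X * d) :=
  csInf_le (bddBelow_entropy_values π)
    ⟨_, ⟨0, fun _ _ _ => by simp⟩, isNormalized_const hd, by simp⟩

end Entropy

omit [Fintype X] [TopologicalSpace X] in
theorem isPlan_dirac [MeasurableSingletonClass X] (x : X) {y : W d} (hy : shift y = y) :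
    IsPlan (Measure.dirac (x, y)) :=
  ⟨inferInstance, fun g _ => by simp only [integral_dirac, hy]⟩

omit [TopologicalSpace X] in
theorem nonempty_plan_values [Nonempty X] [MeasurableSingletonClass X] (hd : 0 < d)
    (c : X × W d → ℝ) :
    {r | ∃ π : Measure (X × W d), IsPlan π ∧ r = ∫ p, c p ∂π + Hent π}.Nonempty :=
  ⟨_, _, isPlan_dirac (Classical.arbitrary X) (y := fun _ => ⟨0, hd⟩) rfl, rfl⟩

theorem bddAbove_plan_values [Nonempty X] [DiscreteTopology X] [MeasurableSingletonClass X]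
    (hd : 0 < d) {c : X × W d → ℝ} (hc : Continuous c) :
    BddAbove {r | ∃ π : Measure (X × W d), IsPlan π ∧ r = ∫ p, c p ∂π + Hent π} := by
  obtain ⟨M, hM⟩ := (isCompact_range hc).bddAbove
  refine ⟨M + Real.log (Fintype.card X * d), ?_⟩
  rintro r ⟨π, ⟨hπ, -⟩, rfl⟩
  have hcM : ∫ p, c p ∂π ≤ M := by
    simpa using integral_mono (hc.integrable_of_compactSpace π) (integrable_const M)
      fun p => hM ⟨p, rfl⟩
  exact add_le_add hcM (Hent_le_log hd π)

theorem le_Pr [Nonempty X] [DiscreteTopology X] [MeasurableSingletonClass X] (hd : 0 < d)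
    {c : X × W d → ℝ} (hc : Continuous c) {π : Measure (X × W d)} (hπ : IsPlan π) :
    ∫ p, c p ∂π + Hent π ≤ Pr c :=
  le_csSup (bddAbove_plan_values hd hc) ⟨π, hπ, rfl⟩

theorem Pr_add_of_integral_eq [Nonempty X] [DiscreteTopology X] [MeasurableSingletonClass X]
    (hd : 0 < d) {c f : X × W d → ℝ} (hc : Continuous c) (hf : Continuous f) {t : ℝ}
    (hft : ∀ π : Measure (X × W d), IsPlan π → ∫ p, f p ∂π = t) :
    Pr (fun p => c p + f p) = Pr c + t := by
  have hint (π : Measure (X × W d)) (hπ : IsPlan π) : ∫ p, c p + f p ∂π = ∫ p, c p ∂π + t := by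
    have := hπ.1
    rw [integral_add (hc.integrable_of_compactSpace π) (hf.integrable_of_compactSpace π),
      hft π hπ]
  have hvalues : {r | ∃ π : Measure (X × W d), IsPlan π ∧ r = ∫ p, c p + f p ∂π + Hent π}
      = (· + t) '' {r | ∃ π : Measure (X × W d), IsPlan π ∧ r = ∫ p, c p ∂π + Hent π} := by
    ext r
    constructor
    · rintro ⟨π, hπ, rfl⟩
      exact ⟨_, ⟨π, hπ, rfl⟩, by rw [hint π hπ]; ring⟩
    · rintro ⟨_, ⟨π, hπ, rfl⟩, rfl⟩
      exact ⟨π, hπ, by rw [hint π hπ]; ring⟩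
  rw [Pr, Pr, hvalues, ← Set.add_singleton, csSup_add (nonempty_plan_values hd c)
    (bddAbove_plan_values hd hc) (Set.singleton_nonempty t) bddAbove_singleton, csSup_singleton]

theorem Pr_add_const [Nonempty X] [DiscreteTopology X] [MeasurableSingletonClass X]
    (hd : 0 < d) {c : X × W d → ℝ} (hc : Continuous c) (t : ℝ) :
    Pr (fun p => c p + t) = Pr c + t :=
  Pr_add_of_integral_eq hd hc continuous_const fun π hπ => by
    have := hπ.1
    simp

theorem Pr_add_coboundary [Nonempty X] [DiscreteTopology X] [MeasurableSingletonClass X]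
    (hd : 0 < d) {c : X × W d → ℝ} (hc : Continuous c) {ψ : W d → ℝ} (hψ : Continuous ψ) :
    Pr (fun p => c p + (ψ (shift p.2) - ψ p.2)) = Pr c := by
  have hψ₁ : Continuous fun p : X × W d => ψ (shift p.2) :=
    hψ.comp (continuous_shift.comp continuous_snd)
  have hψ₀ : Continuous fun p : X × W d => ψ p.2 := hψ.comp continuous_snd
  rw [Pr_add_of_integral_eq hd hc (f := fun p => ψ (shift p.2) - ψ p.2) (hψ₁.sub hψ₀) (t := 0),
    add_zero]
  intro π hπ
  have := hπ.1
  rw [integral_sub (hψ₁.integrable_of_compactSpace π) (hψ₀.integrable_of_compactSpace π),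
    hπ.2 ψ hψ, sub_self]

theorem Pr_mono [Nonempty X] [DiscreteTopology X] [MeasurableSingletonClass X] (hd : 0 < d)
    {c₁ c₂ : X × W d → ℝ} (hc₁ : Continuous c₁) (hc₂ : Continuous c₂) (h : c₁ ≤ c₂) :
    Pr c₁ ≤ Pr c₂ := by
  refine csSup_le (nonempty_plan_values hd c₁) ?_
  rintro _ ⟨π, hπ, rfl⟩
  have := hπ.1
  have hint : ∫ p, c₁ p ∂π ≤ ∫ p, c₂ p ∂π :=
    integral_mono (hc₁.integrable_of_compactSpace π) (hc₂.integrable_of_compactSpace π) h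
  exact (add_le_add_left hint _).trans (le_Pr hd hc₂ hπ)

theorem le_Pr_of_shift_eq [Nonempty X] [DiscreteTopology X] [MeasurableSingletonClass X]
    (hd : 0 < d) {c : X × W d → ℝ} (hc : Continuous c) (x : X) {y : W d} (hy : shift y = y) :
    c (x, y) ≤ Pr c := by
  have := le_Pr hd hc (isPlan_dirac x hy)
  rw [integral_dirac] at this
  linarith [Hent_nonneg (Measure.dirac (x, y))]

theorem Pr_sub_fst_le_of_admissible [Nonempty X] [DiscreteTopology X]
    [MeasurableSingletonClass X] (hd : 0 < d) {c b : X × W d → ℝ} (hc : Continuous c)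
    (hb : Continuous b) {φ : X → ℝ} {ψ : W d → ℝ} (hψ : Continuous ψ)
    (hadm : ∀ (x : X) (y : W d), φ x - ψ y + ψ (shift y) ≥ c (x, y) - b (x, y)) :
    Pr (fun p : X × W d => c p - φ p.1) ≤ Pr b :=
  calc Pr (fun p : X × W d => c p - φ p.1)
      ≤ Pr (fun p => b p + (ψ (shift p.2) - ψ p.2)) :=
        Pr_mono hd (hc.sub_fst φ)
          (hb.add ((hψ.comp (continuous_shift.comp continuous_snd)).sub
            (hψ.comp continuous_snd))) fun p => by linarith [hadm p.1 p.2]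
    _ = Pr b := Pr_add_coboundary hd hb hψ

theorem le_of_admissible_of_shift_eq [Nonempty X] [DiscreteTopology X]
    [MeasurableSingletonClass X] (hd : 0 < d) {c b : X × W d → ℝ} (hb : Continuous b)
    (hbP : Pr b = 0) {φ : X → ℝ} {ψ : W d → ℝ}
    (hadm : ∀ (x : X) (y : W d), φ x - ψ y + ψ (shift y) ≥ c (x, y) - b (x, y))
    (x : X) {y : W d} (hy : shift y = y) : c (x, y) ≤ φ x := by
  have hφ := hadm x y
  rw [hy] at hφ
  linarith [hbP ▸ le_Pr_of_shift_eq hd hb x hy]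

theorem inf_over_admissible_pairs_eq_inf_over_zero_pressure_general
    [Nonempty X] [DiscreteTopology X] [MeasurableSingletonClass X] (hd : 0 < d)
    (c : X × W d → ℝ) (hc : LipCost c)
    (μ : Measure X) (hμ : IsProbabilityMeasure μ) :
    sInf {r | ∃ (φ : X → ℝ) (ψ : W d → ℝ), Continuous ψ ∧
        (∃ b : X × W d → ℝ, LipCost b ∧ Pr b = 0 ∧
          ∀ (x : X) (y : W d),
            φ x - ψ y + ψ (shift y) ≥ c (x, y) - b (x, y)) ∧
        r = ∫ x, φ x ∂μ}
      = sInf {r | ∃ φ : X → ℝ,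
          Pr (fun p : X × W d => c p - φ p.1) = 0 ∧ r = ∫ x, φ x ∂μ} := by
  have hc_cont := hc.continuous
  refine csInf_eq_csInf_of_subset_of_forall_exists_le ?_ ?_ ?_ ?_
  · refine ⟨∫ x, c (x, fun _ => ⟨0, hd⟩) ∂μ, ?_⟩
    rintro _ ⟨φ, ψ, -, ⟨b, hb, hbP, hadm⟩, rfl⟩
    exact integral_mono .of_finite .of_finite fun x =>
      le_of_admissible_of_shift_eq hd hb.continuous hbP hadm x rfl
  · exact ⟨_, fun _ => Pr c, by simpa [sub_eq_add_neg] using Pr_add_const hd hc_cont (-Pr c), rfl⟩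
  · rintro _ ⟨φ, hφ, rfl⟩
    exact ⟨φ, 0, continuous_const, ⟨_, hc.sub_fst φ, hφ, fun x y => by simp⟩, rfl⟩
  · rintro _ ⟨φ, ψ, hψ, ⟨b, hb, hbP, hadm⟩, rfl⟩
    set t := Pr (fun p : X × W d => c p - φ p.1) with ht
    have ht_nonpos : t ≤ 0 := hbP ▸ Pr_sub_fst_le_of_admissible hd hc_cont hb.continuous hψ hadm
    refine ⟨_, ⟨fun x => φ x + t, ?_, rfl⟩, ?_⟩
    · have := Pr_add_const hd (hc_cont.sub_fst φ) (-t)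
      simp only [← ht, ← sub_eq_add_neg, sub_sub, sub_self] at this
      exact this
    · rw [integral_add .of_finite (integrable_const t)]
      simpa using ht_nonpos

/-- The infimum of `∫ φ dμ` over admissible pairs `(φ,ψ) ∈ Φ_c` equals the infimum of
`∫ φ dμ` over the functions `φ` with `P(c − φ) = 0`. -/
theorem inf_over_admissible_pairs_eq_inf_over_zero_pressure
    [Nonempty X] [DiscreteTopology X] [MeasurableSingletonClass X] (hd : 0 < d)
    (c : X × W d → ℝ) (hc : LipCost c)
    (μ : Measure X) (hμ : IsProbabilityMeasure μ) (hfull : ∀ x : X, 0 < μ {x}) :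
    sInf {r | ∃ (φ : X → ℝ) (ψ : W d → ℝ), Continuous ψ ∧
        (∃ b : X × W d → ℝ, LipCost b ∧ Pr b = 0 ∧
          ∀ (x : X) (y : W d),
            φ x - ψ y + ψ (shift y) ≥ c (x, y) - b (x, y)) ∧
        r = ∫ x, φ x ∂μ}
      = sInf {r | ∃ φ : X → ℝ,
          Pr (fun p : X × W d => c p - φ p.1) = 0 ∧ r = ∫ x, φ x ∂μ} :=
  inf_over_admissible_pairs_eq_inf_over_zero_pressure_general hd c hc μ hμ
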